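/- arXiv:1501.07775 — 8 statements merged into one kernel-verified Lean document; each statement's English description precedes it below -/
import Mathlib

section
/- Let q, n, m be natural numbers with q ≥ 1, let R be a symmetric q×q real matrix and let r ∈ ℝ^q. Then Σ over all functions t : {1,…,n} → {1,…,q} of (Π_{v=1}^n r_{t(v)}) · (Σ_{v=1}^n Σ_{w=1}^n R_{t(v),t(w)})^m equals Σ over all vectors n⃗ = (n_1,…,n_q) of nonnegative integers with n_1 + ⋯ + n_q = n of (n!/(n_1!⋯n_q!)) · (Π_{i=1}^q r_i^{n_i}) · (Σ_{i=1}^q Σ_{j=1}^q n_i n_j R_{i,j})^m. -/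
open Finset

/-! Grouping the colourings `t : Fin n → Fin q` by their colour-count vector `c`, both the weight
`∏ r (t v)` and the quadratic form `∑ R (t v) (t w)` depend on `t` only through `c`, and exactly
`multinomial c` colourings have count vector `c`: this is the coefficient of `∏ Xᵢ ^ cᵢ` in
`(∑ Xᵢ) ^ n = ∏_v ∑_i Xᵢ`. -/

variable {α ι : Type*} [Fintype α] [Fintype ι]

theorem MvPolynomial.prod_X_pow_eq_monomial_equivFunOnFinite {R : Type*} [CommSemiring R]
    (k : ι → ℕ) :
    ∏ i, (X i : MvPolynomial ι R) ^ k i = monomial (Finsupp.equivFunOnFinite.symm k) 1 := by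
  rw [monomial_eq, C_1, one_mul, Finsupp.prod_fintype _ _ fun _ ↦ pow_zero _]
  rfl

variable [DecidableEq ι]

def fiberCard (t : α → ι) (i : ι) : ℕ := #{a | t a = i}

theorem sum_fiberCard (t : α → ι) : ∑ i, fiberCard t i = Fintype.card α :=
  (card_eq_sum_card_fiberwise fun a _ ↦ mem_univ (t a)).symm

theorem prod_comp_eq_prod_pow_fiberCard {M : Type*} [CommMonoid M] (t : α → ι) (f : ι → M) :
    ∏ a, f (t a) = ∏ i, f i ^ fiberCard t i := by
  rw [← prod_fiberwise_of_maps_to (fun a _ ↦ mem_univ (t a))]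
  refine prod_congr rfl fun i _ ↦ ?_
  rw [prod_congr rfl fun a ha ↦ congrArg f (mem_filter.1 ha).2, prod_const]
  rfl

theorem sum_comp_eq_sum_fiberCard_smul {M : Type*} [AddCommMonoid M] (t : α → ι) (f : ι → M) :
    ∑ a, f (t a) = ∑ i, fiberCard t i • f i := by
  rw [← sum_fiberwise_of_maps_to (fun a _ ↦ mem_univ (t a))]
  refine sum_congr rfl fun i _ ↦ ?_
  rw [sum_congr rfl fun a ha ↦ congrArg f (mem_filter.1 ha).2, sum_const]
  rfl

theorem sum_sum_comp_eq_sum_sum_fiberCard {S : Type*} [CommSemiring S] (t : α → ι)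
    (B : ι → ι → S) :
    ∑ a, ∑ b, B (t a) (t b) = ∑ i, ∑ j, (fiberCard t i : S) * fiberCard t j * B i j := by
  calc ∑ a, ∑ b, B (t a) (t b) = ∑ i, fiberCard t i • ∑ j, fiberCard t j • B i j := by
        rw [sum_comp_eq_sum_fiberCard_smul t (fun i ↦ ∑ b, B i (t b))]
        simp only [sum_comp_eq_sum_fiberCard_smul t (B _)]
    _ = _ := by simp only [smul_sum, nsmul_eq_mul, mul_assoc]

variable [DecidableEq α]

open MvPolynomial in
theorem card_filter_fiberCard_eq (c : ι → ℕ) (hc : ∑ i, c i = Fintype.card α) :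
    #{t : α → ι | fiberCard t = c} = Nat.multinomial univ c := by
  have expand : (∑ i, X i : MvPolynomial ι ℕ) ^ Fintype.card α =
      ∑ t : α → ι, monomial (Finsupp.equivFunOnFinite.symm (fiberCard t)) 1 := by
    rw [← card_univ, ← prod_const, prod_univ_sum]
    exact sum_congr rfl fun t _ ↦ by
      rw [prod_comp_eq_prod_pow_fiberCard, prod_X_pow_eq_monomial_equivFunOnFinite]
  have := congrArg (coeff (Finsupp.equivFunOnFinite.symm c)) expand
  have hc' : (Finsupp.equivFunOnFinite.symm c).sum (fun _ k ↦ k) = Fintype.card α := by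
    rw [Finsupp.sum_fintype _ _ fun _ ↦ rfl, ← hc]
    rfl
  simp only [coeff_sum_X_pow_of_fintype, if_pos hc',
    Finsupp.multinomial_eq_of_support_subset (subset_univ _), Finsupp.coe_equivFunOnFinite_symm,
    coeff_sum, coeff_monomial, EmbeddingLike.apply_eq_iff_eq, Nat.cast_id, sum_boole] at this
  exact this.symm

theorem sum_comp_fiberCard_eq_sum_multinomial_smul {M : Type*} [AddCommMonoid M]
    (f : (ι → ℕ) → M) :
    ∑ t : α → ι, f (fiberCard t) =
      ∑ c ∈ piAntidiag univ (Fintype.card α), Nat.multinomial univ c • f c := by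
  rw [← sum_fiberwise_of_maps_to (g := fiberCard) (t := piAntidiag univ (Fintype.card α))
    fun t _ ↦ mem_piAntidiag.2 ⟨sum_fiberCard t, fun i _ ↦ mem_univ i⟩]
  refine sum_congr rfl fun c hc ↦ ?_
  rw [sum_congr rfl fun t ht ↦ congrArg f (mem_filter.1 ht).2, sum_const,
    card_filter_fiberCard_eq c (mem_piAntidiag.1 hc).1]

theorem multigraph_exact_count_general (q n m : ℕ)
    (R : Matrix (Fin q) (Fin q) ℝ) (r : Fin q → ℝ) :
    (∑ t : Fin n → Fin q,
        (∏ v : Fin n, r (t v)) *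
          (∑ v : Fin n, ∑ w : Fin n, R (t v) (t w)) ^ m) =
      ∑ c ∈ Finset.Nat.antidiagonalTuple q n,
        (Nat.multinomial Finset.univ c : ℝ) *
          (∏ i : Fin q, r i ^ c i) *
          (∑ i : Fin q, ∑ j : Fin q, (c i : ℝ) * (c j : ℝ) * R i j) ^ m := by
  simp only [prod_comp_eq_prod_pow_fiberCard, sum_sum_comp_eq_sum_sum_fiberCard _ R]
  rw [sum_comp_fiberCard_eq_sum_multinomial_smul
      (fun c ↦ (∏ i, r i ^ c i) * (∑ i, ∑ j, (c i : ℝ) * c j * R i j) ^ m), Fintype.card_fin,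
    piAntidiag_univ_fin_eq_antidiagonalTuple]
  simp only [nsmul_eq_mul, mul_assoc]

theorem multigraph_exact_count (q n m : ℕ) (hq : 1 ≤ q)
    (R : Matrix (Fin q) (Fin q) ℝ) (hR : R.IsSymm) (r : Fin q → ℝ) :
    (∑ t : Fin n → Fin q,
        (∏ v : Fin n, r (t v)) *
          (∑ v : Fin n, ∑ w : Fin n, R (t v) (t w)) ^ m) =
      ∑ c ∈ Finset.Nat.antidiagonalTuple q n,
        (Nat.multinomial Finset.univ c : ℝ) *
          (∏ i : Fin q, r i ^ c i) *
          (∑ i : Fin q, ∑ j : Fin q, (c i : ℝ) * (c j : ℝ) * R i j) ^ m :=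
  multigraph_exact_count_general q n m R r
end

section
/- Let q, n, m be natural numbers with q ≥ 1, let R be a symmetric q×q real matrix and let r ∈ ℝ^q. Define SG_{R,r}(n,m) = Σ over all pairs (G, t), where G is a simple graph on vertex set {1,…,n} with exactly m edges and t : {1,…,n} → {1,…,q}, of (Π_{v=1}^n r_{t(v)}) · (Π_{{u,v} ∈ E(G)} R_{t(u),t(v)}). Then SG_{R,r}(n,m) equals the coefficient of w^m in the polynomial Σ over vectors n⃗ = (n_1,…,n_q) of nonnegative integers with n_1 + ⋯ + n_q = n of (n!/(n_1!⋯n_q!)) · (Π_{i=1}^q r_i^{n_i}) · Π_{1 ≤ i < j ≤ q} (1 + R_{i,j} w)^{n_i n_j} · Π_{i=1}^q (1 + R_{i,i} w)^{n_i (n_i − 1)/2}. -/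
/-!
Fix the type assignment `t` and sum over graphs first. A graph is a subset of the pairs
`u < v`, so the graphs with `m` edges contribute the coefficient of `w ^ m` in
`∏_{u < v} (1 + R (t u) (t v) w)`. As `R` is symmetric, this product depends on `t` only
through the numbers `c i` of vertices of each type: it is
`∏_{i < j} (1 + R i j w) ^ (c i * c j) * ∏_i (1 + R i i w) ^ (c i).choose 2`.
Finally, exactly `multinomial c` type assignments have type counts `c`.
-/

open scoped Classical in
/-- The weighted number of simple `(n,m)`-`(R,r)`-graphs: the sum over pairs `(G,t)` of a
simple graph on `Fin n` with `m` edges and a type assignment `t : Fin n → Fin q` of the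
product of the vertex weights `r (t v)` and the edge weights `R (t u) (t v)`. -/
noncomputable def SG (q n : ℕ) (R : Matrix (Fin q) (Fin q) ℝ) (r : Fin q → ℝ) (m : ℕ) : ℝ :=
  ∑ G : SimpleGraph (Fin n), ∑ t : Fin n → Fin q,
    if G.edgeSet.ncard = m then
      (∏ v : Fin n, r (t v)) *
        ∏ u : Fin n, ∏ v ∈ Finset.univ.filter (fun v => u < v ∧ G.Adj u v), R (t u) (t v)
    else 0

open Finset Polynomial

section Pairs

variable {α : Type*} [LinearOrder α]

theorem card_product_filter_lt_add_card_product_filter_lt {s t : Finset α}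
    (h : Disjoint s t) :
    #{x ∈ s ×ˢ t | x.1 < x.2} + #{x ∈ t ×ˢ s | x.1 < x.2} = #s * #t := by
  have swap : #{x ∈ t ×ˢ s | x.1 < x.2} = #{x ∈ s ×ˢ t | ¬ x.1 < x.2} :=
    card_equiv (Equiv.prodComm α α) fun x => by
      have := disjoint_left.1 h
      grind
  rw [swap, card_filter_add_card_filter_not, card_product]

theorem prod_prod_eq_prod_filter_lt_mul_prod_diag [Fintype α] {M : Type*} [CommMonoid M]
    (g : α → α → M) :
    ∏ i, ∏ j, g i j = (∏ i, ∏ j ∈ univ.filter (i < ·), g i j * g j i) * ∏ i, g i i := by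
  have split (i : α) : ∏ j, g i j =
      (∏ j ∈ univ.filter (i < ·), g i j) * (g i i * ∏ j ∈ univ.filter (· < i), g i j) := by
    rw [← prod_filter_mul_prod_filter_not univ (i < ·),
      ← mul_prod_erase _ _ (by simp : i ∈ univ.filter (fun j => ¬ i < j))]
    congr 3
    ext j
    simp only [mem_erase, mem_filter, mem_univ, true_and, not_lt]
    exact and_comm.trans lt_iff_le_and_ne.symm
  have lower : ∏ i, ∏ j ∈ univ.filter (· < i), g i j =
      ∏ i, ∏ j ∈ univ.filter (i < ·), g j i :=
    prod_comm' (by simp)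
  simp_rw [split, prod_mul_distrib, lower]
  ac_rfl

end Pairs

section TypeCount

variable {V ι : Type*} [Fintype V] [Fintype ι] [DecidableEq ι]

def typeCount (t : V → ι) (i : ι) : ℕ := #(univ.filter fun v => t v = i)

theorem prod_comp_eq_prod_pow_typeCount {M : Type*} [CommMonoid M] (t : V → ι) (g : ι → M) :
    ∏ v, g (t v) = ∏ i, g i ^ typeCount t i := by
  rw [← prod_fiberwise univ t]
  exact prod_congr rfl fun i _ => prod_eq_pow_card fun v hv => by rw [(mem_filter.1 hv).2]

theorem sum_typeCount (t : V → ι) : ∑ i, typeCount t i = Fintype.card V :=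
  (card_eq_sum_card_fiberwise fun v _ => mem_univ (t v)).symm

/-- Compare the coefficients of `∏ i, X i ^ c i` in two expansions of `(∑ i, X i) ^ #V`:
as a sum over the maps `V → ι`, and by the multinomial theorem. -/
theorem card_filter_typeCount_eq [DecidableEq V] (c : ι → ℕ)
    (hc : ∑ i, c i = Fintype.card V) :
    #{t : V → ι | typeCount t = c} = Nat.multinomial univ c := by
  let monomialOf (k : ι → ℕ) : MvPolynomial ι ℕ :=
    MvPolynomial.monomial (Finsupp.equivFunOnFinite.symm k) 1
  have prod_X_pow (k : ι → ℕ) : ∏ i, MvPolynomial.X i ^ k i = monomialOf k := by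
    simp only [monomialOf]
    rw [MvPolynomial.monomial_eq, Finsupp.prod_fintype _ _ fun _ => pow_zero _, map_one,
      one_mul]
    rfl
  have coeff_monomialOf (k : ι → ℕ) :
      (monomialOf k).coeff (Finsupp.equivFunOnFinite.symm c) = if k = c then 1 else 0 := by
    simp [monomialOf, MvPolynomial.coeff_monomial]
  have expand_by_maps := congrArg (MvPolynomial.coeff (Finsupp.equivFunOnFinite.symm c))
    (prod_univ_sum (fun (_ : V) => (univ : Finset ι))
      fun _ i => (MvPolynomial.X i : MvPolynomial ι ℕ))
  have expand_multinomial := congrArg (MvPolynomial.coeff (Finsupp.equivFunOnFinite.symm c))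
    (sum_pow_eq_sum_piAntidiag univ (fun i => (MvPolynomial.X i : MvPolynomial ι ℕ))
      (Fintype.card V))
  rw [prod_const, card_univ] at expand_by_maps
  rw [expand_by_maps, MvPolynomial.coeff_sum] at expand_multinomial
  simp_rw [MvPolynomial.coeff_sum, Fintype.piFinset_univ, prod_comp_eq_prod_pow_typeCount,
    prod_X_pow, ← MvPolynomial.C_eq_coe_nat, MvPolynomial.coeff_C_mul, coeff_monomialOf,
    mul_ite, mul_one, mul_zero, sum_ite_eq', mem_piAntidiag] at expand_multinomial
  rwa [← card_filter, if_pos ⟨hc, fun i _ => mem_univ i⟩] at expand_multinomial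

theorem sum_comp_typeCount [DecidableEq V] {β : Type*} [AddCommMonoid β] (F : (ι → ℕ) → β) :
    ∑ t : V → ι, F (typeCount t) =
      ∑ c ∈ piAntidiag univ (Fintype.card V), Nat.multinomial univ c • F c := by
  rw [← sum_fiberwise_of_maps_to (g := typeCount) (t := piAntidiag univ (Fintype.card V))
    fun t _ => mem_piAntidiag.2 ⟨sum_typeCount t, by simp⟩]
  refine sum_congr rfl fun c hc => ?_
  rw [sum_congr rfl fun t ht => congrArg F (mem_filter.1 ht).2, sum_const,
    card_filter_typeCount_eq c (mem_piAntidiag.1 hc).1]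

theorem prod_filter_lt_comp_eq [LinearOrder V] [LinearOrder ι] {M : Type*} [CommMonoid M]
    (t : V → ι) (f : ι → ι → M) (hf : ∀ i j, f i j = f j i) :
    ∏ p ∈ univ.filter (fun p : V × V => p.1 < p.2), f (t p.1) (t p.2) =
      (∏ i, ∏ j ∈ univ.filter (i < ·), f i j ^ (typeCount t i * typeCount t j)) *
        ∏ i, f i i ^ (typeCount t i).choose 2 := by
  let N (i j : ι) := #{x ∈ univ.filter (t · = i) ×ˢ univ.filter (t · = j) | x.1 < x.2}
  have by_types : ∏ p ∈ univ.filter (fun p : V × V => p.1 < p.2), f (t p.1) (t p.2) =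
      ∏ i, ∏ j, f i j ^ N i j := by
    rw [← prod_fiberwise _ (fun p => (t p.1, t p.2)), Fintype.prod_prod_type]
    refine prod_congr rfl fun i _ => prod_congr rfl fun j _ => ?_
    rw [prod_eq_pow_card (b := f i j) fun p hp => by simp_all [Prod.ext_iff]]
    congr 2
    ext p
    simp only [mem_filter, mem_univ, true_and, Prod.ext_iff, mem_product]
    tauto
  have off_diag {i j : ι} (hij : i < j) : N i j + N j i = typeCount t i * typeCount t j :=
    card_product_filter_lt_add_card_product_filter_lt
      (disjoint_filter.2 fun v _ hi hj => hij.ne (hi.symm.trans hj))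
  rw [by_types, prod_prod_eq_prod_filter_lt_mul_prod_diag]
  congr 1
  · refine prod_congr rfl fun i _ => prod_congr rfl fun j hj => ?_
    rw [hf j i, ← pow_add, off_diag (mem_filter.1 hj).2]
  · exact prod_congr rfl fun i _ => congrArg _ card_product_filter_lt

end TypeCount

theorem coeff_prod_one_add_C_mul_X {R α : Type*} [CommSemiring R] (s : Finset α) (a : α → R)
    (m : ℕ) :
    (∏ p ∈ s, (1 + C (a p) * X)).coeff m = ∑ T ∈ s.powersetCard m, ∏ p ∈ T, a p := by
  classical
  simp_rw [prod_one_add, prod_mul_distrib, prod_const, ← map_prod, finsetSum_coeff,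
    coeff_C_mul_X_pow, powersetCard_eq_filter, sum_filter, eq_comm]

namespace SimpleGraph

open scoped Classical

variable {V : Type*} [Fintype V] [LinearOrder V]

noncomputable def edgePairs (G : SimpleGraph V) : Finset (V × V) :=
  univ.filter fun p => p.1 < p.2 ∧ G.Adj p.1 p.2

theorem ncard_edgeSet_eq_card_edgePairs (G : SimpleGraph V) :
    G.edgeSet.ncard = #G.edgePairs := by
  rw [Set.ncard_eq_toFinset_card']
  refine (card_bij (fun p _ => s(p.1, p.2)) ?_ ?_ ?_).symm
  · rintro ⟨u, v⟩ hp
    simp_all [edgePairs]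
  · rintro ⟨u, v⟩ hp ⟨u', v'⟩ hp' h
    simp only [edgePairs, mem_filter, Sym2.eq_iff] at hp hp' h
    grind
  · intro e he
    induction e with
    | _ u v =>
      rw [Set.mem_toFinset, mem_edgeSet] at he
      rcases he.ne.lt_or_gt with h | h
      · exact ⟨(u, v), by simp [edgePairs, h, he], rfl⟩
      · exact ⟨(v, u), by simp [edgePairs, h, he.symm], Sym2.eq_swap⟩

theorem prod_filter_adj_eq_prod_edgePairs {M : Type*} [CommMonoid M] (G : SimpleGraph V)
    (f : V → V → M) :
    ∏ u, ∏ v ∈ univ.filter (fun v => u < v ∧ G.Adj u v), f u v =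
      ∏ p ∈ G.edgePairs, f p.1 p.2 := by
  simp_rw [edgePairs, prod_filter, Fintype.prod_prod_type]

theorem edgePairs_fromRel {T : Finset (V × V)} (hT : T ⊆ univ.filter fun p => p.1 < p.2) :
    (fromRel fun u v => (u, v) ∈ T).edgePairs = T := by
  have hlt : ∀ p ∈ T, p.1 < p.2 := fun p hp => (mem_filter.1 (hT hp)).2
  ext ⟨u, v⟩
  simp only [edgePairs, mem_filter, mem_univ, true_and, fromRel_adj]
  grind

theorem fromRel_edgePairs (G : SimpleGraph V) :
    (fromRel fun u v => (u, v) ∈ G.edgePairs) = G := by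
  ext u v
  simp only [fromRel_adj, edgePairs, mem_filter, mem_univ, true_and]
  have := G.adj_comm u v
  grind [G.ne_of_adj]

theorem sum_comp_edgePairs {β : Type*} [AddCommMonoid β] (F : Finset (V × V) → β) :
    ∑ G : SimpleGraph V, F G.edgePairs =
      ∑ T ∈ (univ.filter fun p : V × V => p.1 < p.2).powerset, F T :=
  sum_nbij' edgePairs (fun T => fromRel fun u v => (u, v) ∈ T)
    (fun _ _ => mem_powerset.2 (monotone_filter_right _ fun _ _ => And.left))
    (fun _ _ => mem_univ _) (fun G _ => fromRel_edgePairs G)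
    (fun _ hT => edgePairs_fromRel (mem_powerset.1 hT)) (fun _ _ => rfl)

theorem sum_ite_ncard_edgeSet_eq_coeff {R : Type*} [CommSemiring R] (w : V → V → R) (m : ℕ) :
    ∑ G : SimpleGraph V, (if G.edgeSet.ncard = m then
        ∏ u, ∏ v ∈ univ.filter (fun v => u < v ∧ G.Adj u v), w u v else 0) =
      (∏ p ∈ univ.filter (fun p : V × V => p.1 < p.2), (1 + C (w p.1 p.2) * X)).coeff m := by
  simp_rw [ncard_edgeSet_eq_card_edgePairs, prod_filter_adj_eq_prod_edgePairs,
    sum_comp_edgePairs (fun T => if #T = m then ∏ p ∈ T, w p.1 p.2 else 0),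
    coeff_prod_one_add_C_mul_X, powersetCard_eq_filter, sum_filter]

end SimpleGraph

open scoped Classical in
theorem sum_simpleGraph_weight_eq {V ι S : Type*} [Fintype V] [LinearOrder V] [Fintype ι]
    [LinearOrder ι] [CommSemiring S] (t : V → ι) (R : Matrix ι ι S) (hR : R.IsSymm)
    (r : ι → S) (m : ℕ) :
    ∑ G : SimpleGraph V, (if G.edgeSet.ncard = m then
        (∏ v, r (t v)) *
          ∏ u, ∏ v ∈ univ.filter (fun v => u < v ∧ G.Adj u v), R (t u) (t v)
      else 0) =
      (∏ i, r i ^ typeCount t i) *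
        ((∏ i, ∏ j ∈ univ.filter (i < ·),
            (1 + C (R i j) * X) ^ (typeCount t i * typeCount t j)) *
          ∏ i, (1 + C (R i i) * X) ^ (typeCount t i).choose 2).coeff m := by
  simp_rw [← mul_ite_zero, ← mul_sum, SimpleGraph.sum_ite_ncard_edgeSet_eq_coeff,
    prod_filter_lt_comp_eq t (fun i j => 1 + C (R i j) * X) fun i j => by rw [hR.apply i j],
    prod_comp_eq_prod_pow_typeCount]

theorem simple_graph_exact_count_general (q n m : ℕ)
    (R : Matrix (Fin q) (Fin q) ℝ) (hR : R.IsSymm) (r : Fin q → ℝ) :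
    SG q n R r m =
      (∑ c ∈ Finset.Nat.antidiagonalTuple q n,
        Polynomial.C ((Nat.multinomial Finset.univ c : ℝ) * ∏ i : Fin q, r i ^ c i) *
          (∏ i : Fin q, ∏ j ∈ Finset.univ.filter (fun j => i < j),
            (1 + Polynomial.C (R i j) * Polynomial.X) ^ (c i * c j)) *
          ∏ i : Fin q,
            (1 + Polynomial.C (R i i) * Polynomial.X) ^ (c i * (c i - 1) / 2)).coeff m := by
  rw [SG, sum_comm]
  simp_rw [sum_simpleGraph_weight_eq _ R hR r m, Nat.choose_two_right]
  refine (sum_comp_typeCount (V := Fin n) fun c : Fin q → ℕ => (∏ i, r i ^ c i) *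
      ((∏ i, ∏ j ∈ univ.filter (i < ·), (1 + C (R i j) * X) ^ (c i * c j)) *
        ∏ i, (1 + C (R i i) * X) ^ (c i * (c i - 1) / 2)).coeff m).trans ?_
  rw [Fintype.card_fin, piAntidiag_univ_fin_eq_antidiagonalTuple, finsetSum_coeff]
  refine sum_congr rfl fun c _ => ?_
  rw [nsmul_eq_mul, mul_assoc, coeff_C_mul, mul_assoc]

theorem simple_graph_exact_count (q n m : ℕ) (hq : 1 ≤ q)
    (R : Matrix (Fin q) (Fin q) ℝ) (hR : R.IsSymm) (r : Fin q → ℝ) :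
    SG q n R r m =
      (∑ c ∈ Finset.Nat.antidiagonalTuple q n,
        Polynomial.C ((Nat.multinomial Finset.univ c : ℝ) * ∏ i : Fin q, r i ^ c i) *
          (∏ i : Fin q, ∏ j ∈ Finset.univ.filter (fun j => i < j),
            (1 + Polynomial.C (R i j) * Polynomial.X) ^ (c i * c j)) *
          ∏ i : Fin q,
            (1 + Polynomial.C (R i i) * Polynomial.X) ^ (c i * (c i - 1) / 2)).coeff m :=
  simple_graph_exact_count_general q n m R hR r
end

section
/- Let q ≥ 2 be an integer, R a symmetric q×q real matrix, c a nonzero real, and x ∈ ℝ^q with x_i > 0 for all i and Σ_i x_i = 1, setting s = xᵀRx and assuming s > 0. Let E be the q×(q−1) real matrix whose j-th column is e_j − e_q, let H = Eᵀ(diag(x)^{−1} + (2c/s)((2/s)·(Rx)(Rx)ᵀ − R))E, and assume the matrix I − (2c/s)·diag(x)R is invertible. Define C = (1/c)·((1−c)·𝟙ᵀ(I − (2c/s)·diag(x)R)^{−1} x − 1)·det(I − (2c/s)·diag(x)R), where 𝟙 is the all-ones vector. Then C = det(H) · Π_{i=1}^q x_i. -/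
/-!
Let `A` be the Hessian of `Φ_c` on all of `ℝ^q`, so that `H = Eᵀ A E`. Since `Eᵀ 𝟙 = 0`, adding
multiples of `(Rx) 𝟙ᵀ`, `𝟙 (Rx)ᵀ` and `𝟙 𝟙ᵀ` to `A` does not change `H`; with the right multiples
the corrected matrix `A'` sends `x` to `𝟙`. Bordering `E` by the column `x` (a change of basis of
determinant `Σ xᵢ = 1`) then block-triangularises `A'`, so `det H = det A'`.
On the other side, `diag(x) A' = B (I + M)` with `B = I − (2c/s) diag(x) R` and `M` of rank two,
built from `b = B⁻¹ x`; the rank-two determinant lemma evaluates `det (I + M)` to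
`((1 − c) 𝟙ᵀ b − 1) / c`, the symmetry of `R` entering through `𝟙ᵀ B b = 1`.
-/

open Matrix

/-- The `q × (q−1)` matrix whose `j`-th column is `e_j − e_q`. -/
def Emat (q : ℕ) : Matrix (Fin q) (Fin (q - 1)) ℝ :=
  fun i j => if (i : ℕ) = (j : ℕ) then 1 else if (i : ℕ) = q - 1 then -1 else 0

namespace Matrix

variable {m n R : Type*} [Fintype n] [CommRing R]

theorem det_one_add_vecMulVec_add_vecMulVec [DecidableEq n] (u₁ u₂ w₁ w₂ : n → R) :
    det (1 + vecMulVec u₁ w₁ + vecMulVec u₂ w₂) =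
      (1 + w₁ ⬝ᵥ u₁) * (1 + w₂ ⬝ᵥ u₂) - (w₁ ⬝ᵥ u₂) * (w₂ ⬝ᵥ u₁) := by
  let U : Matrix n (Fin 2) R := of fun i => ![u₁ i, u₂ i]
  let W : Matrix (Fin 2) n R := of ![w₁, w₂]
  have hUW : U * W = vecMulVec u₁ w₁ + vecMulVec u₂ w₂ := by
    ext i j
    simp [U, W, mul_apply, Fin.sum_univ_two, vecMulVec_apply]
  rw [add_assoc, ← hUW, det_one_add_mul_comm, det_fin_two]
  simp [U, W, vecMul, dotProduct]

theorem transpose_mul_vecMulVec_mul (P : Matrix n m R) (u w : n → R) :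
    Pᵀ * vecMulVec u w * P = vecMulVec (Pᵀ *ᵥ u) (Pᵀ *ᵥ w) := by
  rw [mul_vecMulVec, vecMulVec_mul, ← mulVec_transpose]

end Matrix

section Emat

variable {m : ℕ}

-- The columns of `Emat (m + 1)` are indexed by `Fin (m + 1 - 1)`, which is `Fin m` only up to
-- defeq; hence the type ascription on `1`.
theorem Emat_submatrix_finSumFinEquiv :
    (Emat (m + 1)).submatrix finSumFinEquiv id =
      fromRows (1 : Matrix (Fin m) (Fin m) ℝ) (of fun _ _ => -1) := by
  ext (i | i) j
  · have : (i : ℕ) ≠ m := i.isLt.ne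
    simp [Emat, one_apply, Fin.ext_iff, this]
  · have : m ≠ (j : ℕ) := j.isLt.ne'
    simp [Emat, this]

theorem Emat_transpose_mulVec_one : (Emat (m + 1))ᵀ *ᵥ 1 = 0 := by
  ext j
  calc ((Emat (m + 1))ᵀ *ᵥ 1) j = ∑ k, (Emat (m + 1)).submatrix finSumFinEquiv id k j := by
        rw [mulVec_transpose, vecMul, one_dotProduct]
        exact (finSumFinEquiv.sum_comp _).symm
    _ = 0 := by
        rw [Emat_submatrix_finSumFinEquiv, Fintype.sum_sum_type]
        simp [one_apply]

theorem det_fromCols_Emat_submatrix_finSumFinEquiv (x : Fin (m + 1) → ℝ) :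
    det ((fromCols (Emat (m + 1)) (replicateCol (Fin 1) x)).submatrix finSumFinEquiv id) =
      ∑ i, x i := by
  have hcol : (replicateCol (Fin 1) x).submatrix finSumFinEquiv id =
      fromRows (replicateCol (Fin 1) fun i => x (finSumFinEquiv (.inl i)))
        (replicateCol (Fin 1) fun i => x (finSumFinEquiv (.inr i))) := by
    ext (i | i) j <;> rfl
  have hblocks : (fromCols (Emat (m + 1)) (replicateCol (Fin 1) x)).submatrix finSumFinEquiv id =
      fromCols ((Emat (m + 1)).submatrix finSumFinEquiv id)
        ((replicateCol (Fin 1) x).submatrix finSumFinEquiv id) := rfl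
  rw [hblocks, Emat_submatrix_finSumFinEquiv, hcol, fromCols_fromRows_eq_fromBlocks,
    det_fromBlocks_one₁₁, det_unique, ← finSumFinEquiv.sum_comp, Fintype.sum_sum_type]
  simp [mul_apply, add_comm]

theorem det_Emat_transpose_mul_mul_Emat (A : Matrix (Fin (m + 1)) (Fin (m + 1)) ℝ)
    (x : Fin (m + 1) → ℝ) (hx : ∑ i, x i = 1) (hAx : A *ᵥ x = 1) :
    det ((Emat (m + 1))ᵀ * A * Emat (m + 1)) = det A := by
  set E := Emat (m + 1)
  set F := fromCols E (replicateCol (Fin 1) x)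
  set e : Fin m ⊕ Fin 1 ≃ Fin (m + 1) := finSumFinEquiv
  have hEAx : Eᵀ * A * replicateCol (Fin 1) x = 0 := by
    rw [Matrix.mul_assoc, ← replicateCol_mulVec, hAx, ← replicateCol_mulVec,
      Emat_transpose_mulVec_one, replicateCol_zero]
  have hxAx : replicateRow (Fin 1) x * A * replicateCol (Fin 1) x = 1 := by
    rw [Matrix.mul_assoc, ← replicateCol_mulVec, hAx, replicateRow_mul_replicateCol,
      dotProduct_one, hx]
    ext i j
    rw [Subsingleton.elim i j]
    simp
  have hFAF : Fᵀ * A * F = fromBlocks (Eᵀ * A * E) 0 (replicateRow (Fin 1) x * A * E) 1 := by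
    rw [transpose_fromCols, transpose_replicateCol, fromRows_mul, fromRows_mul_fromCols, hEAx,
      hxAx]
  calc det (Eᵀ * A * E) = det (Fᵀ * A * F) := by
        rw [hFAF, det_fromBlocks_zero₁₂, det_one, mul_one]
    _ = det ((F.submatrix e id)ᵀ * A.submatrix e e * F.submatrix e id) := by
        rw [transpose_submatrix, submatrix_mul_equiv, submatrix_mul_equiv, submatrix_id_id]
    _ = det A := by
        rw [det_mul, det_mul, det_transpose, det_fromCols_Emat_submatrix_finSumFinEquiv, hx,
          det_submatrix_equiv_self, one_mul, mul_one]

end Emat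

section Hessian

variable {n : Type*} [Fintype n] [DecidableEq n] (R : Matrix n n ℝ) (c : ℝ) (x : n → ℝ)
  (s : ℝ)

noncomputable def ambientHessian : Matrix n n ℝ :=
  diagonal (fun i => (x i)⁻¹) + (2 * c / s) • ((2 / s) • vecMulVec (R *ᵥ x) (R *ᵥ x) - R)

noncomputable def correctedHessian : Matrix n n ℝ :=
  ambientHessian R c x s - (2 * c / s) • (vecMulVec (R *ᵥ x) 1 + vecMulVec 1 (R *ᵥ x)) +
    (2 * c) • vecMulVec 1 1

variable {R c x s}

theorem correctedHessian_mulVec (hx : ∀ i, x i ≠ 0) (hs : (R *ᵥ x) ⬝ᵥ x = s) (hs0 : s ≠ 0)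
    (hsum : ∑ i, x i = 1) : correctedHessian R c x s *ᵥ x = 1 := by
  simp only [correctedHessian, ambientHessian, add_mulVec, sub_mulVec, smul_mulVec,
    vecMulVec_mulVec, op_smul_eq_smul, hs, one_dotProduct, hsum]
  ext i
  simp [mulVec_diagonal, hx i]
  field_simp
  ring

theorem diagonal_mul_correctedHessian (hx : ∀ i, x i ≠ 0) (hs0 : s ≠ 0) {b : n → ℝ}
    (hb : (1 - (2 * c / s) • (diagonal x * R)) *ᵥ b = x) :
    diagonal x * correctedHessian R c x s =
      (1 - (2 * c / s) • (diagonal x * R)) *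
        (1 + vecMulVec (b - x) ((2 / s) • (R *ᵥ x) - 1) +
          vecMulVec (c • b) (1 - ((2 / s) • (R *ᵥ x) - 1))) := by
  set B := 1 - (2 * c / s) • (diagonal x * R)
  have hBb : B *ᵥ (b - x) = (2 * c / s) • (diagonal x *ᵥ (R *ᵥ x)) := by
    rw [mulVec_sub, hb]
    simp [B, sub_mulVec, smul_mulVec, ← mulVec_mulVec]
  rw [mul_add, mul_add, mul_one, mul_vecMulVec, mul_vecMulVec, hBb, mulVec_smul, hb]
  ext i j
  simp only [B, correctedHessian, ambientHessian, vecMulVec_one, one_vecMulVec, smul_add,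
    diagonal_mul, Matrix.add_apply, Matrix.sub_apply, diagonal_apply, Matrix.smul_apply,
    vecMulVec_apply, smul_eq_mul, replicateCol_apply, replicateRow_apply, Pi.one_apply, mul_one,
    smul_vecMulVec, one_apply, mulVec_diagonal, Pi.sub_apply, Pi.smul_apply]
  split_ifs with hij
  · subst hij
    field_simp [hx i]
    ring
  · field_simp
    ring

theorem smul_mulVec_sub_one_dotProduct (hR : R.IsSymm) (hc : c ≠ 0)
    (hsum : ∑ i, x i = 1) {b : n → ℝ} (hb : (1 - (2 * c / s) • (diagonal x * R)) *ᵥ b = x) :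
    ((2 / s) • (R *ᵥ x) - 1) ⬝ᵥ b = ((1 - c) * ∑ i, b i - 1) / c := by
  have hxR : 1 ᵥ* (diagonal x * R) = R *ᵥ x := by
    rw [← vecMul_vecMul, ← mulVec_transpose, hR.eq]
    congr
    ext i
    simp [vecMul_diagonal]
  have h := congrArg (1 ⬝ᵥ ·) hb
  simp only [sub_mulVec, one_mulVec, smul_mulVec, dotProduct_sub, dotProduct_smul,
    dotProduct_mulVec, hxR, one_dotProduct, hsum, smul_eq_mul] at h
  rw [sub_dotProduct, smul_dotProduct, one_dotProduct, smul_eq_mul, eq_div_iff hc]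
  linear_combination -h

theorem det_diagonal_mul_correctedHessian (hR : R.IsSymm) (hc : c ≠ 0) (hx : ∀ i, x i ≠ 0)
    (hs : (R *ᵥ x) ⬝ᵥ x = s) (hs0 : s ≠ 0) (hsum : ∑ i, x i = 1) {b : n → ℝ}
    (hb : (1 - (2 * c / s) • (diagonal x * R)) *ᵥ b = x) :
    det (diagonal x * correctedHessian R c x s) =
      det (1 - (2 * c / s) • (diagonal x * R)) * (((1 - c) * ∑ i, b i - 1) / c) := by
  have hwx : ((2 / s) • (R *ᵥ x) - 1) ⬝ᵥ x = 1 := by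
    rw [sub_dotProduct, smul_dotProduct, hs, one_dotProduct, hsum, smul_eq_mul]
    field_simp
    ring
  rw [diagonal_mul_correctedHessian hx hs0 hb, det_mul, det_one_add_vecMulVec_add_vecMulVec]
  simp only [dotProduct_sub, sub_dotProduct, dotProduct_smul, one_dotProduct, hwx, hsum,
    smul_mulVec_sub_one_dotProduct hR hc hsum hb, smul_eq_mul]
  field_simp
  ring

end Hessian

theorem Emat_transpose_mul_correctedHessian_mul_Emat {m : ℕ}
    (R : Matrix (Fin (m + 1)) (Fin (m + 1)) ℝ) (c : ℝ) (x : Fin (m + 1) → ℝ) (s : ℝ) :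
    (Emat (m + 1))ᵀ * correctedHessian R c x s * Emat (m + 1) =
      (Emat (m + 1))ᵀ * ambientHessian R c x s * Emat (m + 1) := by
  simp only [correctedHessian, Matrix.add_mul, Matrix.sub_mul, Matrix.mul_add, Matrix.mul_sub,
    Matrix.mul_smul, Matrix.smul_mul, transpose_mul_vecMulVec_mul, Emat_transpose_mulVec_one,
    vecMulVec_zero, zero_vecMulVec, add_zero, smul_zero, sub_zero]

theorem C_eq_det_Hessian_mul_prod_general (q : ℕ)
    (R : Matrix (Fin q) (Fin q) ℝ) (hsymm : R.IsSymm) (c : ℝ) (hc : c ≠ 0)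
    (x : Fin q → ℝ) (hx : ∀ i, 0 < x i) (hsum : ∑ i, x i = 1)
    (s : ℝ) (hs : s = ∑ i, ∑ j, x i * R i j * x j) (hspos : 0 < s)
    (H : Matrix (Fin (q - 1)) (Fin (q - 1)) ℝ)
    (hH : H = (Emat q)ᵀ *
      (Matrix.diagonal (fun i => (x i)⁻¹) +
        (2 * c / s) • ((2 / s) • vecMulVec (R *ᵥ x) (R *ᵥ x) - R)) * Emat q)
    (hinv : IsUnit ((1 : Matrix (Fin q) (Fin q) ℝ) -
      (2 * c / s) • (Matrix.diagonal x * R)).det)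
    (C : ℝ)
    (hC : C = (1 / c) *
      ((1 - c) *
        ((fun _ => (1 : ℝ)) ⬝ᵥ
          (((1 : Matrix (Fin q) (Fin q) ℝ) - (2 * c / s) • (Matrix.diagonal x * R))⁻¹ *ᵥ x))
        - 1) *
      ((1 : Matrix (Fin q) (Fin q) ℝ) - (2 * c / s) • (Matrix.diagonal x * R)).det) :
    C = H.det * ∏ i, x i := by
  obtain ⟨m, rfl⟩ : ∃ m, q = m + 1 :=
    Nat.exists_eq_succ_of_ne_zero (by rintro rfl; simp at hsum)
  set B := 1 - (2 * c / s) • (diagonal x * R)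
  have hb : B *ᵥ (B⁻¹ *ᵥ x) = x := by rw [mulVec_mulVec, mul_nonsing_inv B hinv, one_mulVec]
  have hxx : (R *ᵥ x) ⬝ᵥ x = s := by
    rw [hs, dotProduct_comm]
    simp only [dotProduct, mulVec, Finset.mul_sum, mul_assoc]
  have hx0 i : x i ≠ 0 := (hx i).ne'
  calc C = det B * (((1 - c) * ∑ i, (B⁻¹ *ᵥ x) i - 1) / c) := by
        rw [hC, ← Pi.one_def, one_dotProduct]
        ring
    _ = det (correctedHessian R c x s) * ∏ i, x i := by
        rw [← det_diagonal_mul_correctedHessian hsymm hc hx0 hxx hspos.ne' hsum hb, det_mul,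
          det_diagonal, mul_comm]
    _ = H.det * ∏ i, x i := by
        rw [hH, ← det_Emat_transpose_mul_mul_Emat _ x hsum
          (correctedHessian_mulVec hx0 hxx hspos.ne' hsum),
          Emat_transpose_mul_correctedHessian_mul_Emat]
        rfl

theorem C_eq_det_Hessian_mul_prod (q : ℕ) (hq : 2 ≤ q)
    (R : Matrix (Fin q) (Fin q) ℝ) (hsymm : R.IsSymm) (c : ℝ) (hc : c ≠ 0)
    (x : Fin q → ℝ) (hx : ∀ i, 0 < x i) (hsum : ∑ i, x i = 1)
    (s : ℝ) (hs : s = ∑ i, ∑ j, x i * R i j * x j) (hspos : 0 < s)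
    (H : Matrix (Fin (q - 1)) (Fin (q - 1)) ℝ)
    (hH : H = (Emat q)ᵀ *
      (Matrix.diagonal (fun i => (x i)⁻¹) +
        (2 * c / s) • ((2 / s) • vecMulVec (R *ᵥ x) (R *ᵥ x) - R)) * Emat q)
    (hinv : IsUnit ((1 : Matrix (Fin q) (Fin q) ℝ) -
      (2 * c / s) • (Matrix.diagonal x * R)).det)
    (C : ℝ)
    (hC : C = (1 / c) *
      ((1 - c) *
        ((fun _ => (1 : ℝ)) ⬝ᵥ
          (((1 : Matrix (Fin q) (Fin q) ℝ) - (2 * c / s) • (Matrix.diagonal x * R))⁻¹ *ᵥ x))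
        - 1) *
      ((1 : Matrix (Fin q) (Fin q) ℝ) - (2 * c / s) • (Matrix.diagonal x * R)).det) :
    C = H.det * ∏ i, x i :=
  C_eq_det_Hessian_mul_prod_general q R hsymm c hc x hx hsum s hs hspos H hH hinv C hC
end

section
/- Let q ≥ 2 be an integer and let E be the q×(q−1) real matrix whose j-th column is e_j − e_q (i.e. E_{i,j} = 1 if i = j ≤ q−1, E_{q,j} = −1, and 0 otherwise). Then for every q×q real matrix M, det(EᵀME) = 𝟙ᵀ·adj(M)·𝟙, where adj(M) is the adjugate (transpose of the cofactor matrix) of M and 𝟙 is the all-ones vector. In particular, if M is invertible then det(EᵀME) = det(M) · (𝟙ᵀM^{−1}𝟙). -/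
/-!
Complete `E` to the unit lower triangular matrix `L = [E | e_q]`. Then `EᵀME` is `LᵀML` with its
last row and column deleted, so its determinant is the `(q, q)` entry of
`adj (LᵀML) = adj L · adj M · (adj L)ᵀ`. Since `𝟙ᵀL = e_qᵀ` and `det L = 1`, the last row of
`adj L` is `𝟙ᵀ`, which leaves `𝟙ᵀ adj(M) 𝟙`.
-/

open Matrix

namespace Matrix

variable {R : Type*} [CommRing R]

theorem det_submatrix_succAbove_self {n : ℕ} (A : Matrix (Fin (n + 1)) (Fin (n + 1)) R)
    (i : Fin (n + 1)) : (A.submatrix i.succAbove i.succAbove).det = A.adjugate i i := by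
  rw [adjugate_fin_succ_eq_det_submatrix, Even.neg_one_pow ⟨_, rfl⟩, one_mul]

variable {n : Type*} [Fintype n] [DecidableEq n]

theorem adjugate_row_eq_det_smul_of_vecMul_eq_single {L : Matrix n n R} {v : n → R} {k : n}
    (h : v ᵥ* L = Pi.single k 1) : L.adjugate k = L.det • v :=
  calc L.adjugate k = Pi.single k 1 ᵥ* L.adjugate := (single_one_vecMul k _).symm
    _ = v ᵥ* (L * L.adjugate) := by rw [← h, vecMul_vecMul]
    _ = L.det • v := by rw [mul_adjugate, vecMul_smul, vecMul_one]

theorem adjugate_transpose_mul_mul_apply_self (M : Matrix n n R) {L : Matrix n n R} {v : n → R}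
    {k : n} (h : v ᵥ* L = Pi.single k 1) :
    (Lᵀ * M * L).adjugate k k = L.det ^ 2 * (v ⬝ᵥ (M.adjugate *ᵥ v)) := by
  rw [adjugate_mul_distrib, adjugate_mul_distrib, ← adjugate_transpose,
    ← Matrix.mul_assoc, mul_mul_apply, transpose_transpose,
    adjugate_row_eq_det_smul_of_vecMul_eq_single h, mulVec_smul, smul_dotProduct,
    dotProduct_smul, smul_eq_mul, smul_eq_mul, sq, mul_assoc]

theorem dotProduct_adjugate_mulVec_of_isUnit_det {M : Matrix n n R} (hM : IsUnit M.det)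
    (u v : n → R) : u ⬝ᵥ (M.adjugate *ᵥ v) = M.det * (u ⬝ᵥ (M⁻¹ *ᵥ v)) := by
  rw [← cramer_eq_adjugate_mulVec, ← det_smul_inv_mulVec_eq_cramer M v hM, dotProduct_smul,
    smul_eq_mul]

end Matrix

def ematCompletion (R : Type*) [Ring R] (n : ℕ) : Matrix (Fin (n + 1)) (Fin (n + 1)) R :=
  fun i j => if i = j then 1 else if i = Fin.last n then -1 else 0

section ematCompletion

variable {R : Type*} (n : ℕ)

theorem ematCompletion_isLowerTriangular [Ring R] : (ematCompletion R n).IsLowerTriangular := by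
  intro i j hij
  have hij : i < j := hij
  have hi : i ≠ Fin.last n := (hij.trans_le (Fin.le_last j)).ne
  simp [ematCompletion, hij.ne, hi]

theorem det_ematCompletion [CommRing R] : (ematCompletion R n).det = 1 := by
  rw [det_of_isLowerTriangular _ (ematCompletion_isLowerTriangular n)]
  simp [ematCompletion]

theorem ones_vecMul_ematCompletion [Ring R] :
    (fun _ => 1) ᵥ* ematCompletion R n = Pi.single (Fin.last n) 1 := by
  ext j
  by_cases hj : j = Fin.last n
  · subst hj
    simp +contextual [vecMul, dotProduct, ematCompletion]
  · simp [vecMul, dotProduct, ematCompletion, hj, Finset.sum_ite, Finset.filter_eq', Ne.symm hj]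

end ematCompletion

theorem Emat_eq_submatrix_ematCompletion (n : ℕ) :
    Emat (n + 1) = (ematCompletion ℝ n).submatrix id Fin.castSucc := by
  ext i j
  simp only [Emat, ematCompletion, submatrix_apply, id, Fin.ext_iff, Fin.val_last,
    Fin.val_castSucc, Nat.add_sub_cancel]

theorem transpose_Emat_mul_mul_Emat (n : ℕ) (M : Matrix (Fin (n + 1)) (Fin (n + 1)) ℝ) :
    (Emat (n + 1))ᵀ * M * Emat (n + 1) =
      ((ematCompletion ℝ n)ᵀ * M * ematCompletion ℝ n).submatrix Fin.castSucc Fin.castSucc := by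
  rw [Emat_eq_submatrix_ematCompletion, transpose_submatrix,
    submatrix_mul _ _ _ id _ Function.bijective_id, submatrix_mul _ _ _ id _ Function.bijective_id,
    submatrix_id_id]

theorem det_conj_Emat_eq_ones_adjugate_ones (q : ℕ) (hq : 2 ≤ q)
    (M : Matrix (Fin q) (Fin q) ℝ) :
    ((Emat q)ᵀ * M * Emat q).det =
      (fun _ => (1 : ℝ)) ⬝ᵥ (M.adjugate *ᵥ (fun _ => (1 : ℝ))) ∧
    (IsUnit M.det →
      ((Emat q)ᵀ * M * Emat q).det =
        M.det * ((fun _ => (1 : ℝ)) ⬝ᵥ (M⁻¹ *ᵥ (fun _ => (1 : ℝ))))) := by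
  obtain ⟨n, rfl⟩ : ∃ n, q = n + 1 := ⟨q - 1, by omega⟩
  have hdet : ((Emat (n + 1))ᵀ * M * Emat (n + 1)).det =
      (fun _ => (1 : ℝ)) ⬝ᵥ (M.adjugate *ᵥ (fun _ => (1 : ℝ))) := by
    rw [transpose_Emat_mul_mul_Emat, ← Fin.succAbove_last, det_submatrix_succAbove_self,
      adjugate_transpose_mul_mul_apply_self M (ones_vecMul_ematCompletion n), det_ematCompletion,
      one_pow, one_mul]
  exact ⟨hdet, fun hM => hdet.trans (dotProduct_adjugate_mulVec_of_isUnit_det hM _ _)⟩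
end

section
/- Let q ≥ 2 be an integer and let E be the q×(q−1) real matrix whose j-th column is e_j − e_q. Then for every q×q real matrix M and every v ∈ ℝ^q, (𝟙ᵀv)² · det(M) = (vᵀMv + 1)·det(EᵀME) − det(Eᵀ(M + M v vᵀ M)E), where 𝟙 is the all-ones vector. (Equivalently: concatenating v as a last column to E yields a square matrix F with det(F) = 𝟙ᵀv, and det(FᵀMF) admits the stated block expansion.) -/
open Matrix

namespace Matrix

variable {R : Type*} [CommRing R] {ι m : Type*}

theorem det_fromBlocks_neg_one₂₂ [Fintype m] [DecidableEq m] (A : Matrix m m R) (b c : m → R) :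
    (fromBlocks A (replicateCol (Fin 1) b) (replicateRow (Fin 1) c) (-1)).det =
      -(A + vecMulVec b c).det := by
  have : Invertible (1 : Matrix (Fin 1) (Fin 1) R) := invertibleOne
  have : Invertible (-1 : Matrix (Fin 1) (Fin 1) R) := invertibleNeg 1
  rw [det_fromBlocks₂₂, invOf_neg, invOf_one, Matrix.mul_neg, Matrix.mul_one, Matrix.neg_mul,
    sub_neg_eq_add, det_unique, neg_apply, one_apply_eq, neg_one_mul, vecMulVec_eq (Fin 1)]
  -- the sides differ only in the `Fintype (Fin 1)` instance used by `vecMulVec_eq`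
  rfl

/-- Expanding along the last row, which is `(c, d) = (c, -1) + (0, d + 1)`. -/
theorem det_fromBlocks_replicateCol_replicateRow [Fintype m] [DecidableEq m] (A : Matrix m m R)
    (b c : m → R) (d : R) :
    (fromBlocks A (replicateCol (Fin 1) b) (replicateRow (Fin 1) c) (of fun _ _ => d)).det =
      (d + 1) * A.det - (A + vecMulVec b c).det := by
  set N := fromBlocks A (replicateCol (Fin 1) b) (replicateRow (Fin 1) c) (-1)
  have hsplit : fromBlocks A (replicateCol (Fin 1) b) (replicateRow (Fin 1) c) (of fun _ _ => d) =
      N.updateRow (Sum.inr 0) (N (Sum.inr 0) + Pi.single (Sum.inr 0) (d + 1)) := by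
    ext (i | i) (j | j) <;> simp [N, updateRow_apply, Fin.fin_one_eq_zero]
  have hcorner : N.updateRow (Sum.inr 0) (Pi.single (Sum.inr 0) (d + 1)) =
      fromBlocks A (replicateCol (Fin 1) b) 0 (of fun _ _ => d + 1) := by
    ext (i | i) (j | j) <;> simp [N, updateRow_apply, Fin.fin_one_eq_zero]
  rw [hsplit, det_updateRow_add, updateRow_eq_self, hcorner, det_fromBlocks_neg_one₂₂,
    det_fromBlocks_zero₂₁, det_unique (of fun _ _ => d + 1 : Matrix (Fin 1) (Fin 1) R)]
  simp only [of_apply]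
  ring

theorem fromCols_transpose_mul_mul_fromCols [Fintype ι] (E : Matrix ι m R) (M : Matrix ι ι R)
    (v : ι → R) :
    (fromCols E (replicateCol (Fin 1) v))ᵀ * M * fromCols E (replicateCol (Fin 1) v) =
      fromBlocks (Eᵀ * M * E) (replicateCol (Fin 1) ((Eᵀ * M) *ᵥ v))
        (replicateRow (Fin 1) (v ᵥ* (M * E))) (of fun _ _ => v ⬝ᵥ (M *ᵥ v)) := by
  rw [transpose_fromCols, transpose_replicateCol, fromRows_mul, fromRows_mul_fromCols]
  congr 1
  · rw [replicateRow_vecMul, Matrix.mul_assoc]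
  · rw [Matrix.mul_assoc, ← replicateCol_mulVec, replicateRow_mul_replicateCol]

theorem transpose_mul_mul_add_vecMulVec [Fintype ι] (E : Matrix ι m R) (M : Matrix ι ι R)
    (v : ι → R) :
    Eᵀ * M * E + vecMulVec ((Eᵀ * M) *ᵥ v) (v ᵥ* (M * E)) =
      Eᵀ * (M + M * vecMulVec v v * M) * E := by
  rw [vecMulVec_eq (Fin 1), replicateCol_mulVec, replicateRow_vecMul, vecMulVec_eq (Fin 1),
    Matrix.mul_add, Matrix.add_mul]
  simp only [Matrix.mul_assoc]

theorem det_fromCols_transpose_mul_mul_fromCols [Fintype ι] [Fintype m] [DecidableEq m]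
    (E : Matrix ι m R) (M : Matrix ι ι R) (v : ι → R) :
    ((fromCols E (replicateCol (Fin 1) v))ᵀ * M * fromCols E (replicateCol (Fin 1) v)).det =
      (v ⬝ᵥ (M *ᵥ v) + 1) * (Eᵀ * M * E).det - (Eᵀ * (M + M * vecMulVec v v * M) * E).det := by
  rw [fromCols_transpose_mul_mul_fromCols, det_fromBlocks_replicateCol_replicateRow,
    transpose_mul_mul_add_vecMulVec]

theorem det_transpose_mul_mul_self_of_equiv {κ : Type*} [Fintype ι] [DecidableEq ι] [Fintype κ]
    [DecidableEq κ] (F : Matrix ι κ R) (e : ι ≃ κ) (M : Matrix ι ι R) :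
    (Fᵀ * M * F).det = (F.submatrix id e).det ^ 2 * M.det := by
  have hconj : (F.submatrix id e)ᵀ * M * F.submatrix id e = (Fᵀ * M * F).submatrix e e := by
    rw [transpose_submatrix, ← submatrix_id_id M, submatrix_mul _ _ _ _ _ Function.bijective_id,
      submatrix_mul _ _ _ _ _ Function.bijective_id, submatrix_id_id]
    rfl
  rw [← det_submatrix_equiv_self e, ← hconj, det_mul, det_mul, det_transpose]
  ring

end Matrix

theorem det_fromCols_Emat_replicateCol (n : ℕ) (v : Fin (n + 1) → ℝ) :
    ((fromCols (Emat (n + 1)) (replicateCol (Fin 1) v)).submatrix id finSumFinEquiv.symm).det =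
      ∑ i, v i := by
  have hblocks : (fromCols (Emat (n + 1)) (replicateCol (Fin 1) v)).submatrix finSumFinEquiv id =
      fromBlocks (1 : Matrix (Fin n) (Fin n) ℝ) (replicateCol (Fin 1) fun i => v (Fin.castSucc i))
        (replicateRow (Fin 1) fun _ => -1) (of fun _ _ => v (Fin.last n)) := by
    ext (i | i) (j | j) <;> simp [Emat, one_apply, Fin.ext_iff, Fin.fin_one_eq_zero] <;>
      first | rfl | grind
  rw [← det_submatrix_equiv_self finSumFinEquiv, submatrix_submatrix, Equiv.symm_comp_self,
    Function.id_comp, hblocks, det_fromBlocks_one₁₁, det_unique, Fin.sum_univ_castSucc]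
  simp [sub_eq_add_neg, add_comm, dotProduct]

theorem block_determinant_identity_general (q : ℕ)
    (M : Matrix (Fin q) (Fin q) ℝ) (v : Fin q → ℝ) :
    ((fun _ => (1 : ℝ)) ⬝ᵥ v) ^ 2 * M.det =
      (v ⬝ᵥ (M *ᵥ v) + 1) * ((Emat q)ᵀ * M * Emat q).det -
        ((Emat q)ᵀ * (M + M * vecMulVec v v * M) * Emat q).det := by
  cases q with
  | zero => simp
  | succ n =>
    rw [← det_fromCols_transpose_mul_mul_fromCols,
      det_transpose_mul_mul_self_of_equiv _ finSumFinEquiv.symm, det_fromCols_Emat_replicateCol]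
    simp [dotProduct]

theorem block_determinant_identity (q : ℕ) (hq : 2 ≤ q)
    (M : Matrix (Fin q) (Fin q) ℝ) (v : Fin q → ℝ) :
    ((fun _ => (1 : ℝ)) ⬝ᵥ v) ^ 2 * M.det =
      (v ⬝ᵥ (M *ᵥ v) + 1) * ((Emat q)ᵀ * M * Emat q).det -
        ((Emat q)ᵀ * (M + M * vecMulVec v v * M) * Emat q).det :=
  block_determinant_identity_general q M v
end

section
/- Let q ≥ 2 be an integer, R a symmetric q×q real matrix with nonnegative entries, r ∈ ℝ^q with positive entries, and c > 0. Let S = {x ∈ ℝ^q : x_i ≥ 0 for all i, Σ_i x_i = 1} and define Φ_c : S → ℝ by Φ_c(x) = Σ_i x_i(log x_i − log r_i) − c·log(xᵀRx), with the convention 0·log 0 = 0. If φ ∈ S satisfies φᵀRφ > 0 and φ_i = 0 for some index i, then φ is not a local minimum of Φ_c on S: every neighborhood of φ in S contains a point y with yᵀRy > 0 and Φ_c(y) < Φ_c(φ). -/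
/-- The simplex `S = {x : x_i ≥ 0, Σ x_i = 1}`. -/
def simplex (q : ℕ) : Set (Fin q → ℝ) :=
  {x | (∀ i, 0 ≤ x i) ∧ ∑ i, x i = 1}

/-- `Φ_c(x) = Σ_i x_i (log x_i − log r_i) − c log(xᵀRx)` (with `0 log 0 = 0`, which is
automatic since `Real.log 0 = 0`). -/
noncomputable def Phi {q : ℕ} (R : Matrix (Fin q) (Fin q) ℝ) (r : Fin q → ℝ) (c : ℝ)
    (x : Fin q → ℝ) : ℝ :=
  (∑ i, x i * (Real.log (x i) - Real.log (r i))) -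
    c * Real.log (∑ i, ∑ j, x i * R i j * x j)

/-!
Move mass `t` from a coordinate `j₀` with `φ j₀ > 0` to a coordinate `i₀` with `φ i₀ = 0`.
Along this segment `Φ_c(φ + t v) = t log t + F t`, where `F` is differentiable at `0`:
the other coordinates either stay fixed or stay away from `0`, and `log (xᵀRx)` is smooth
near `φ` because `φᵀRφ > 0`. Since `(F t - F 0) / t` stays bounded while `log t → -∞`,
`Φ_c` drops below `Φ_c(φ)` for all small `t > 0`.
-/

open Filter Topology

theorem eventually_mul_log_add_lt {f : ℝ → ℝ} (hf : DifferentiableAt ℝ f 0) :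
    ∀ᶠ t in 𝓝[>] 0, t * Real.log t + f t < f 0 := by
  have hslope : Tendsto (fun t => (f t - f 0) / t) (𝓝[>] 0) (𝓝 (deriv f 0)) := by
    refine ((hasDerivAt_iff_tendsto_slope.1 hf.hasDerivAt).mono_left
      (nhdsWithin_mono _ fun t ht => ne_of_gt ht)).congr fun t => ?_
    simp [slope, div_eq_inv_mul]
  have hbot : Tendsto (fun t => Real.log t + (f t - f 0) / t) (𝓝[>] 0) atBot :=
    tendsto_atBot_add_right_of_ge' _ (deriv f 0 + 1) Real.tendsto_log_nhdsGT_zero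
      (hslope.eventually (eventually_le_nhds (lt_add_one _)))
  filter_upwards [hbot.eventually (eventually_lt_atBot 0), self_mem_nhdsWithin]
    with t hneg (ht : 0 < t)
  have := mul_neg_of_pos_of_neg ht hneg
  rw [mul_add, mul_div_cancel₀ _ ht.ne'] at this
  linarith

theorem differentiableAt_affine_mul_log_sub {a b : ℝ} (h : a ≠ 0 ∨ b = 0) (d : ℝ) :
    DifferentiableAt ℝ (fun t => (a + t * b) * (Real.log (a + t * b) - d)) 0 := by
  rcases h with ha | rfl
  · have : a + 0 * b ≠ 0 := by simpa using ha
    fun_prop (disch := exact this)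
  · simp

theorem exists_pos_of_mem_simplex {q : ℕ} {x : Fin q → ℝ} (hx : x ∈ simplex q) :
    ∃ j, 0 < x j := by
  obtain ⟨j, -, hj⟩ := Finset.exists_lt_of_sum_lt (s := Finset.univ) (f := 0) (g := x)
    (by simp [hx.2])
  exact ⟨j, hj⟩

theorem add_smul_single_sub_single_mem_simplex {q : ℕ} {x : Fin q → ℝ} (hx : x ∈ simplex q)
    {i j : Fin q} (hij : i ≠ j) {t : ℝ} (ht : 0 ≤ t) (htj : t ≤ x j) :
    x + t • (Pi.single i 1 - Pi.single j 1) ∈ simplex q := by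
  refine ⟨fun k => ?_, ?_⟩
  · rcases eq_or_ne k i with rfl | hki
    · simp [hij, add_nonneg (hx.1 k) ht]
    rcases eq_or_ne k j with rfl | hkj
    · simp [hki]; linarith
    · simp [hki, hkj, hx.1 k]
  · simp [Finset.sum_add_distrib, Finset.sum_sub_distrib, ← Finset.mul_sum, hx.2]

theorem differentiableAt_Phi_add_smul_sub_mul_log {q : ℕ} (R : Matrix (Fin q) (Fin q) ℝ)
    (r : Fin q → ℝ) (c : ℝ) {x v : Fin q → ℝ} {i₀ : Fin q} (hx : x i₀ = 0) (hv : v i₀ = 1)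
    (hsupp : ∀ i ≠ i₀, x i ≠ 0 ∨ v i = 0) (hQ : ∑ i, ∑ j, x i * R i j * x j ≠ 0) :
    DifferentiableAt ℝ (fun t => Phi R r c (x + t • v) - t * Real.log t) 0 := by
  have hsplit : ∀ t : ℝ, Phi R r c (x + t • v) - t * Real.log t =
      -(t * Real.log (r i₀)) +
        ∑ i ∈ Finset.univ.erase i₀,
          (x i + t * v i) * (Real.log (x i + t * v i) - Real.log (r i)) -
        c * Real.log (∑ i, ∑ j, (x + t • v) i * R i j * (x + t • v) j) := by
    intro t
    rw [Phi, ← Finset.add_sum_erase _ _ (Finset.mem_univ i₀)]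
    simp only [Pi.add_apply, Pi.smul_apply, smul_eq_mul, hx, hv, zero_add, mul_one]
    ring
  have hentropy : DifferentiableAt ℝ (fun t : ℝ => ∑ i ∈ Finset.univ.erase i₀,
      (x i + t * v i) * (Real.log (x i + t * v i) - Real.log (r i))) 0 :=
    DifferentiableAt.fun_sum fun i hi =>
      differentiableAt_affine_mul_log_sub (hsupp i (Finset.ne_of_mem_erase hi)) _
  have hQ' : ∑ i, ∑ j, (x + (0 : ℝ) • v) i * R i j * (x + (0 : ℝ) • v) j ≠ 0 := by
    simpa using hQ
  simp_rw [hsplit]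
  fun_prop (disch := exact hQ')

theorem no_local_minimum_on_boundary_general (q : ℕ)
    (R : Matrix (Fin q) (Fin q) ℝ)
    (r : Fin q → ℝ) (c : ℝ)
    (phi : Fin q → ℝ) (hphi : phi ∈ simplex q)
    (hs : 0 < ∑ i, ∑ j, phi i * R i j * phi j)
    (hbd : ∃ i, phi i = 0) :
    ∀ V ∈ nhdsWithin phi (simplex q), ∃ y ∈ V, y ∈ simplex q ∧
      0 < (∑ i, ∑ j, y i * R i j * y j) ∧ Phi R r c y < Phi R r c phi := by
  intro V hV
  obtain ⟨i₀, hi₀⟩ := hbd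
  obtain ⟨j₀, hj₀⟩ := exists_pos_of_mem_simplex hphi
  have hij : i₀ ≠ j₀ := fun h => hj₀.ne' (h ▸ hi₀)
  set v : Fin q → ℝ := Pi.single i₀ 1 - Pi.single j₀ 1 with hv
  have hpath : Tendsto (fun t : ℝ => phi + t • v) (𝓝 0) (𝓝 phi) := by
    have hcont : Continuous fun t : ℝ => phi + t • v := by fun_prop
    simpa using hcont.tendsto 0
  have hsimplex : ∀ᶠ t : ℝ in 𝓝[>] 0, phi + t • v ∈ simplex q := by
    filter_upwards [Ioo_mem_nhdsGT hj₀] with t ht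
    exact add_smul_single_sub_single_mem_simplex hphi hij ht.1.le ht.2.le
  have hmemV : ∀ᶠ t : ℝ in 𝓝[>] 0, phi + t • v ∈ V :=
    tendsto_nhdsWithin_iff.2 ⟨hpath.mono_left nhdsWithin_le_nhds, hsimplex⟩ hV
  have hQcont : Continuous fun x : Fin q → ℝ => ∑ i, ∑ j, x i * R i j * x j := by fun_prop
  have hQpos :
      ∀ᶠ t : ℝ in 𝓝[>] 0, 0 < ∑ i, ∑ j, (phi + t • v) i * R i j * (phi + t • v) j :=
    (((hQcont.tendsto phi).comp hpath).eventually (lt_mem_nhds hs)).filter_mono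
      nhdsWithin_le_nhds
  have hdescent : ∀ᶠ t : ℝ in 𝓝[>] 0, Phi R r c (phi + t • v) < Phi R r c phi := by
    have hsupp : ∀ i ≠ i₀, phi i ≠ 0 ∨ v i = 0 := fun i hi => by
      rcases eq_or_ne i j₀ with rfl | hj
      · exact .inl hj₀.ne'
      · exact .inr (by simp [hv, hi, hj])
    filter_upwards [eventually_mul_log_add_lt (differentiableAt_Phi_add_smul_sub_mul_log R r c
      hi₀ (by simp [hv, hij]) hsupp hs.ne')] with t ht
    simpa using ht
  obtain ⟨t, ht⟩ := (hmemV.and (hsimplex.and (hQpos.and hdescent))).exists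
  exact ⟨phi + t • v, ht⟩

theorem no_local_minimum_on_boundary (q : ℕ) (hq : 2 ≤ q)
    (R : Matrix (Fin q) (Fin q) ℝ) (hsymm : R.IsSymm) (hnonneg : ∀ i j, 0 ≤ R i j)
    (r : Fin q → ℝ) (hr : ∀ i, 0 < r i) (c : ℝ) (hc : 0 < c)
    (phi : Fin q → ℝ) (hphi : phi ∈ simplex q)
    (hs : 0 < ∑ i, ∑ j, phi i * R i j * phi j)
    (hbd : ∃ i, phi i = 0) :
    ∀ V ∈ nhdsWithin phi (simplex q), ∃ y ∈ V, y ∈ simplex q ∧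
      0 < (∑ i, ∑ j, y i * R i j * y j) ∧ Phi R r c y < Phi R r c phi :=
  no_local_minimum_on_boundary_general q R r c phi hphi hs hbd
end

section
/- Let q ≥ 2 be an integer, let R be a symmetric q×q real matrix with nonnegative entries that is irreducible, suppose the all-ones vector 𝟙 is an eigenvector of R with eigenvalue λ₁ equal to the largest eigenvalue of R, and assume all other eigenvalues of R are ≤ 0. Let c > 0, let S = {x ∈ ℝ^q : x_i ≥ 0 for all i, Σ_i x_i = 1}, and define Φ_c(x) = Σ_i x_i·log x_i − c·log(xᵀRx), with the convention 0·log 0 = 0. Then for every x ∈ S with xᵀRx > 0 and x ≠ 𝟙/q, one has Φ_c(x) > Φ_c(𝟙/q); that is, Φ_c attains a strict global minimum on {x ∈ S : xᵀRx > 0} at the barycenter 𝟙/q. -/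
open Matrix

/-- A symmetric matrix is irreducible if no nonempty proper subset `T` of the index set
satisfies `R i j = 0` for all `i ∈ T`, `j ∉ T`. -/
def MatrixIrreducible {q : ℕ} (R : Matrix (Fin q) (Fin q) ℝ) : Prop :=
  ∀ T : Finset (Fin q), T.Nonempty → T ≠ Finset.univ →
    ∃ i ∈ T, ∃ j ∉ T, R i j ≠ 0

/-- `Φ_c(x) = Σ_i x_i log x_i − c log(xᵀRx)` (with `0 log 0 = 0`, which is automatic
since `Real.log 0 = 0`). -/
noncomputable def PhiOne {q : ℕ} (R : Matrix (Fin q) (Fin q) ℝ) (c : ℝ)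
    (x : Fin q → ℝ) : ℝ :=
  (∑ i, x i * Real.log (x i)) - c * Real.log (∑ i, ∑ j, x i * R i j * x j)

/-!
Both terms of `Φ_c` are minimised separately at the barycenter `𝟙/q`. The entropy part
`Σ xᵢ log xᵢ` has its strict minimum on the simplex there by strict convexity of `t log t`
(Jensen). For the quadratic part, expand `x` in an orthonormal eigenbasis of `R`: at most one
eigenvalue is positive, and `𝟙` is an eigenvector for it, so `xᵀRx ≤ λ₁ (𝟙 ⬝ x)² / q = λ₁ / q`,
which is the value of `xᵀRx` at `𝟙/q`; since `c > 0` and `log` is monotone, `-c log(xᵀRx)` is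
also minimal there.
-/

open Finset

lemma OrthonormalBasis.dotProduct_eq_sum {ι n : Type*} [Fintype ι] [Fintype n]
    (b : OrthonormalBasis ι ℝ (EuclideanSpace ℝ n)) (u v : n → ℝ) :
    u ⬝ᵥ v = ∑ i, (b i ⬝ᵥ u) * (b i ⬝ᵥ v) := by
  have := b.sum_inner_mul_inner (WithLp.toLp 2 v) (WithLp.toLp 2 u)
  simp only [EuclideanSpace.inner_eq_star_dotProduct, star_trivial] at this
  rw [← this]
  exact Finset.sum_congr rfl fun i _ => by rw [dotProduct_comm u]; ring

namespace Matrix.IsHermitian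

open Polynomial

variable {n : Type*} [Fintype n] [DecidableEq n] {A : Matrix n n ℝ} (hA : A.IsHermitian)

lemma eigenvectorBasis_dotProduct_mulVec (i : n) (v : n → ℝ) :
    hA.eigenvectorBasis i ⬝ᵥ (A *ᵥ v) = hA.eigenvalues i * (hA.eigenvectorBasis i ⬝ᵥ v) := by
  rw [dotProduct_mulVec, ← mulVec_transpose, (isHermitian_iff_isSymm.mp hA).eq,
    hA.mulVec_eigenvectorBasis, smul_dotProduct, smul_eq_mul]

lemma dotProduct_mulVec_eq_sum (x : n → ℝ) :
    x ⬝ᵥ (A *ᵥ x) = ∑ i, hA.eigenvalues i * (hA.eigenvectorBasis i ⬝ᵥ x) ^ 2 := by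
  rw [hA.eigenvectorBasis.dotProduct_eq_sum]
  exact Finset.sum_congr rfl fun i _ => by rw [hA.eigenvectorBasis_dotProduct_mulVec]; ring

lemma dotProduct_mulVec_nonpos (hneg : ∀ i, hA.eigenvalues i ≤ 0) (x : n → ℝ) :
    x ⬝ᵥ (A *ᵥ x) ≤ 0 := by
  rw [hA.dotProduct_mulVec_eq_sum]
  exact Finset.sum_nonpos fun i _ => mul_nonpos_of_nonpos_of_nonneg (hneg i) (sq_nonneg _)

/-- In the eigenbasis, `v` has no component along eigenvectors of eigenvalues `≠ μ`, so it lies on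
the axis of the only positive eigenvalue, and the bound is read off coordinatewise. -/
lemma dotProduct_mulVec_mul_le_of_mulVec_eq_smul (hpos : #{i | 0 < hA.eigenvalues i} ≤ 1)
    {v : n → ℝ} {μ : ℝ} (hv : A *ᵥ v = μ • v) (hμ : 0 < μ) (x : n → ℝ) :
    x ⬝ᵥ (A *ᵥ x) * (v ⬝ᵥ v) ≤ μ * (v ⬝ᵥ x) ^ 2 := by
  set b := hA.eigenvectorBasis
  have hcoord (i : n) : (hA.eigenvalues i - μ) * (b i ⬝ᵥ v) = 0 := by
    have := hA.eigenvectorBasis_dotProduct_mulVec i v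
    rw [hv, dotProduct_smul, smul_eq_mul] at this
    linarith
  rw [b.dotProduct_eq_sum v v, b.dotProduct_eq_sum v x, hA.dotProduct_mulVec_eq_sum]
  by_cases! h : ∀ i, b i ⬝ᵥ v = 0
  · simp [h]
  obtain ⟨i₀, hi₀⟩ := h
  have heig : hA.eigenvalues i₀ = μ := by
    linarith [(mul_eq_zero.mp (hcoord i₀)).resolve_right hi₀]
  have hnonpos : ∀ i ≠ i₀, hA.eigenvalues i ≤ 0 := fun i hi => by
    by_contra! h
    exact hi (Finset.card_le_one.mp hpos i (by simpa using h) i₀ (by simpa [heig] using hμ))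
  have hvanish : ∀ i ≠ i₀, b i ⬝ᵥ v = 0 := fun i hi =>
    (mul_eq_zero.mp (hcoord i)).resolve_left (by linarith [hnonpos i hi])
  have hcollapse (y : n → ℝ) : ∑ i, (b i ⬝ᵥ v) * (b i ⬝ᵥ y) = (b i₀ ⬝ᵥ v) * (b i₀ ⬝ᵥ y) :=
    Finset.sum_eq_single_of_mem i₀ (mem_univ _) fun i _ hi => by rw [hvanish i hi, zero_mul]
  have hquad : ∑ i, hA.eigenvalues i * (b i ⬝ᵥ x) ^ 2 ≤ μ * (b i₀ ⬝ᵥ x) ^ 2 := by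
    rw [← Finset.add_sum_erase _ _ (mem_univ i₀), heig]
    exact add_le_of_nonpos_right <| Finset.sum_nonpos fun i hi =>
      mul_nonpos_of_nonpos_of_nonneg (hnonpos i (ne_of_mem_erase hi)) (sq_nonneg _)
  rw [hcollapse, hcollapse]
  nlinarith [mul_le_mul_of_nonneg_right hquad (mul_self_nonneg (b i₀ ⬝ᵥ v))]

lemma card_filter_eigenvalues_eq {lam : n → ℝ} (h : A.charpoly = ∏ i, (X - C (lam i)))
    (p : ℝ → Prop) [DecidablePred p] :
    #{i | p (hA.eigenvalues i)} = #{i | p (lam i)} := by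
  have hroots : univ.val.map hA.eigenvalues = univ.val.map lam := by
    have := hA.roots_charpoly_eq_eigenvalues
    rw [h, roots_prod] at this
    · simpa using this.symm
    · simp [Finset.prod_ne_zero_iff, X_sub_C_ne_zero]
  simpa [Multiset.countP_map, ← Finset.filter_val] using congrArg (Multiset.countP p) hroots

lemma card_filter_pos_eigenvalues_le_one {lam : n → ℝ} (h : A.charpoly = ∏ i, (X - C (lam i)))
    {i₀ : n} (hneg : ∀ i ≠ i₀, lam i ≤ 0) :
    #{i | 0 < hA.eigenvalues i} ≤ 1 := by
  rw [hA.card_filter_eigenvalues_eq h]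
  refine Finset.card_le_one.mpr fun i hi j hj => ?_
  simp only [mem_filter, mem_univ, true_and] at hi hj
  by_contra hij
  rcases eq_or_ne i i₀ with rfl | hi₀
  · exact (hneg j (Ne.symm hij)).not_gt hj
  · exact (hneg i hi₀).not_gt hi

lemma eigenvalues_nonpos {lam : n → ℝ} (h : A.charpoly = ∏ i, (X - C (lam i)))
    (hlam : ∀ i, lam i ≤ 0) (i : n) :
    hA.eigenvalues i ≤ 0 := by
  have hcount := hA.card_filter_eigenvalues_eq h (0 < ·)
  rw [filter_false_of_mem fun i _ => (hlam i).not_gt, card_empty, card_eq_zero,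
    filter_eq_empty_iff] at hcount
  exact not_lt.mp (hcount (mem_univ i))

end Matrix.IsHermitian

lemma exists_ne_of_ne_uniform {ι : Type*} [Fintype ι] {x : ι → ℝ} (hsum : ∑ i, x i = 1)
    (hne : x ≠ fun _ => 1 / (Fintype.card ι : ℝ)) : ∃ j k, x j ≠ x k := by
  by_contra! h
  refine hne (funext fun i => ?_)
  have hcard : (Fintype.card ι : ℝ) * x i = 1 := by
    rw [← hsum, Finset.sum_congr rfl fun j _ => h j i]
    simp
  rw [eq_div_iff (left_ne_zero_of_mul_eq_one hcard)]
  linarith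

lemma sum_mul_log_uniform_lt {ι : Type*} [Fintype ι] {x : ι → ℝ} (hx : ∀ i, 0 ≤ x i)
    (hsum : ∑ i, x i = 1) (hne : x ≠ fun _ => 1 / (Fintype.card ι : ℝ)) :
    ∑ _ : ι, 1 / (Fintype.card ι : ℝ) * Real.log (1 / Fintype.card ι) <
      ∑ i, x i * Real.log (x i) := by
  obtain ⟨j, k, hjk⟩ := exists_ne_of_ne_uniform hsum hne
  have hcard : (0 : ℝ) < Fintype.card ι := by
    have : Nonempty ι := ⟨j⟩
    exact_mod_cast Fintype.card_pos
  have hjensen := Real.strictConvexOn_mul_log.map_sum_lt (t := univ)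
    (w := fun _ => 1 / (Fintype.card ι : ℝ)) (p := x) (fun _ _ => by positivity)
    (by simp [hcard.ne']) (fun i _ => Set.mem_Ici.mpr (hx i)) ⟨j, mem_univ _, k, mem_univ _, hjk⟩
  simp only [smul_eq_mul, ← Finset.mul_sum, hsum, mul_one] at hjensen
  rw [Finset.sum_const, card_univ, nsmul_eq_mul]
  calc (Fintype.card ι : ℝ) * (1 / Fintype.card ι * Real.log (1 / Fintype.card ι))
      < Fintype.card ι * (1 / Fintype.card ι * ∑ i, x i * Real.log (x i)) := by gcongr
    _ = ∑ i, x i * Real.log (x i) := by field_simp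

theorem Phi_strict_global_min_at_barycenter (q : ℕ) (hq : 2 ≤ q)
    (R : Matrix (Fin q) (Fin q) ℝ) (hsymm : R.IsSymm)
    (lam : Fin q → ℝ)
    (hspec : R.charpoly = ∏ i : Fin q, (Polynomial.X - Polynomial.C (lam i)))
    (hone : R *ᵥ (fun _ => (1 : ℝ)) = lam ⟨0, by omega⟩ • (fun _ => (1 : ℝ)))
    (hneg : ∀ i : Fin q, i ≠ ⟨0, by omega⟩ → lam i ≤ 0)
    (c : ℝ) (hc : 0 < c) :
    ∀ x : Fin q → ℝ, (∀ i, 0 ≤ x i) → ∑ i, x i = 1 →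
      0 < (∑ i, ∑ j, x i * R i j * x j) →
      x ≠ (fun _ => 1 / (q : ℝ)) →
      PhiOne R c (fun _ => 1 / (q : ℝ)) < PhiOne R c x := by
  intro x hx hsum hpos hne
  set lam₁ := lam ⟨0, by omega⟩
  have hR : R.IsHermitian := isHermitian_iff_isSymm.mpr hsymm
  have hquad (y : Fin q → ℝ) : ∑ i, ∑ j, y i * R i j * y j = y ⬝ᵥ (R *ᵥ y) := by
    simp only [dotProduct, mulVec, Finset.mul_sum, mul_assoc]
  rw [hquad] at hpos
  have hlam₁ : 0 < lam₁ := by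
    by_contra! h
    have hlam (i : Fin q) : lam i ≤ 0 := if hi : i = ⟨0, by omega⟩ then hi ▸ h else hneg i hi
    exact (hR.dotProduct_mulVec_nonpos (hR.eigenvalues_nonpos hspec hlam) x).not_gt hpos
  have hbound : x ⬝ᵥ (R *ᵥ x) * q ≤ lam₁ := by
    simpa [dotProduct, hsum] using hR.dotProduct_mulVec_mul_le_of_mulVec_eq_smul
      (hR.card_filter_pos_eigenvalues_le_one hspec hneg) hone hlam₁ x
  have hbar : (fun _ => 1 / (q : ℝ)) ⬝ᵥ (R *ᵥ fun _ => 1 / (q : ℝ)) = lam₁ / q := by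
    have : (fun _ : Fin q => 1 / (q : ℝ)) = (1 / (q : ℝ)) • fun _ => (1 : ℝ) := by ext; simp
    rw [this, mulVec_smul, hone]
    simp only [dotProduct, Pi.smul_apply, smul_eq_mul, mul_one, sum_const, card_univ,
      Fintype.card_fin, nsmul_eq_mul]
    field_simp
  have hentropy := sum_mul_log_uniform_lt hx hsum (by simpa using hne)
  simp only [Fintype.card_fin] at hentropy
  have hlog : Real.log (x ⬝ᵥ (R *ᵥ x)) ≤ Real.log (lam₁ / q) :=
    Real.log_le_log hpos (by rw [le_div_iff₀ (by positivity)]; exact hbound)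
  unfold PhiOne
  rw [hquad, hquad, hbar]
  linarith [mul_le_mul_of_nonneg_left hlog hc.le]
end

section
/- Let q ≥ 2 be an integer, let R be a symmetric q×q real matrix with R𝟙 = λ₁𝟙 for some λ₁ ≠ 0, where 𝟙 is the all-ones vector, let c be a real number with c ≠ 1/2, and let E be the q×(q−1) real matrix whose j-th column is e_j − e_q. Then (1 − 2c) · det( Eᵀ( q·I − (2cq/λ₁)·R )E ) = q^q · det( I − (2c/λ₁)·R ). -/
/-!
Border `E` with the all-ones column: `P = [E | 𝟙]`. The columns of `E` sum to zero, so if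
`M 𝟙 = s 𝟙` then `Pᵀ M P` is block lower triangular with diagonal blocks `Eᵀ M E` and
`𝟙ᵀ M 𝟙 = q s`, while `det P = q`. Hence `q · det M = s · det (Eᵀ M E)`. For
`M = q (I - (2c/λ₁) R)`, `R 𝟙 = λ₁ 𝟙` gives `s = q (1 - 2c)`, and
`det M = q^q det (I - (2c/λ₁) R)`.
-/

open Matrix

namespace Matrix

variable {R : Type*} [CommRing R] {m n : Type*} [Fintype m] [Fintype n] [DecidableEq n]

theorem det_transpose_fromCols_mul_mul_fromCols {E : Matrix m n R} (hE : 1 ᵥ* E = 0)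
    {M : Matrix m m R} {s : R} (hM : M *ᵥ 1 = s • 1) :
    ((fromCols E (replicateCol (Fin 1) 1))ᵀ * M * fromCols E (replicateCol (Fin 1) 1)).det =
      (Eᵀ * M * E).det * (s * Fintype.card m) := by
  have hcorner : Eᵀ * M * replicateCol (Fin 1) (1 : m → R) = 0 := by
    rw [Matrix.mul_assoc, ← replicateCol_mulVec, hM, ← replicateCol_mulVec, mulVec_smul,
      mulVec_transpose, hE, smul_zero, replicateCol_zero]
  rw [transpose_fromCols, fromRows_mul, fromRows_mul_fromCols, hcorner,
    det_fromBlocks_zero₁₂, det_fin_one, transpose_replicateCol,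
    Matrix.mul_assoc (replicateRow _ _), ← replicateCol_mulVec, hM,
    replicateRow_mul_replicateCol_apply]
  simp

def diffLast (n R : Type*) [Ring R] [DecidableEq n] : Matrix (n ⊕ Fin 1) n R :=
  fromRows 1 (replicateRow (Fin 1) (-1))

theorem one_vecMul_diffLast : 1 ᵥ* diffLast n R = 0 := by
  ext j
  simp [diffLast, vecMul, dotProduct, one_apply]

theorem det_fromCols_diffLast :
    (fromCols (diffLast n R) (replicateCol (Fin 1) 1)).det = Fintype.card n + 1 := by
  have hones :
      replicateCol (Fin 1) (1 : n ⊕ Fin 1 → R) = fromRows (replicateCol (Fin 1) 1) 1 := by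
    ext (i | i) j
    · simp
    · simp [Subsingleton.elim i j]
  rw [diffLast, hones, fromCols_fromRows_eq_fromBlocks, det_fromBlocks_one₁₁, det_fin_one]
  simp [add_comm]

theorem card_add_one_mul_det_eq_mul_det_diffLast_conj [IsDomain R] [CharZero R]
    {M : Matrix (n ⊕ Fin 1) (n ⊕ Fin 1) R} {s : R} (hM : M *ᵥ 1 = s • 1) :
    (Fintype.card n + 1) * M.det = s * ((diffLast n R)ᵀ * M * diffLast n R).det := by
  have h := det_transpose_fromCols_mul_mul_fromCols one_vecMul_diffLast hM
  rw [det_mul, det_mul, det_transpose, det_fromCols_diffLast, Fintype.card_sum,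
    Fintype.card_fin, Nat.cast_add, Nat.cast_one] at h
  refine mul_left_cancel₀ (Nat.cast_add_one_ne_zero (Fintype.card n)) ?_
  linear_combination h

end Matrix

theorem Emat_submatrix_finSumFinEquiv_s17 {q : ℕ} (h : q - 1 + 1 = q) :
    (Emat q).submatrix (finSumFinEquiv.trans (finCongr h)) id = diffLast (Fin (q - 1)) ℝ := by
  ext (i | i) j
  · simp [Emat, diffLast, one_apply, Fin.ext_iff, i.isLt.ne]
  · simp [Emat, diffLast, j.isLt.ne']

theorem natCast_mul_det_eq_mul_det_Emat_conj {q : ℕ} (hq : 1 ≤ q)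
    {M : Matrix (Fin q) (Fin q) ℝ} {s : ℝ} (hM : M *ᵥ 1 = s • 1) :
    q * M.det = s * ((Emat q)ᵀ * M * Emat q).det := by
  have h : q - 1 + 1 = q := Nat.sub_add_cancel hq
  set e := finSumFinEquiv.trans (finCongr h)
  have hMe : M.submatrix e e *ᵥ 1 = s • 1 := by
    rw [submatrix_mulVec_equiv, Pi.one_comp, hM]
    rfl
  have := card_add_one_mul_det_eq_mul_det_diffLast_conj hMe
  rw [det_submatrix_equiv_self, ← Emat_submatrix_finSumFinEquiv_s17 h, transpose_submatrix,
    submatrix_mul_equiv, submatrix_mul_equiv, submatrix_id_id, Fintype.card_fin] at this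
  rwa [← Nat.cast_add_one, h] at this

theorem det_Hessian_at_barycenter_general (q : ℕ) (hq : 2 ≤ q)
    (R : Matrix (Fin q) (Fin q) ℝ)
    (lam1 : ℝ) (hlam1 : lam1 ≠ 0)
    (hone : R *ᵥ (fun _ => (1 : ℝ)) = lam1 • (fun _ => (1 : ℝ)))
    (c : ℝ) :
    (1 - 2 * c) *
        ((Emat q)ᵀ *
          ((q : ℝ) • (1 : Matrix (Fin q) (Fin q) ℝ) - (2 * c * q / lam1) • R) *
          Emat q).det =
      (q : ℝ) ^ q *
        ((1 : Matrix (Fin q) (Fin q) ℝ) - (2 * c / lam1) • R).det := by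
  set A : Matrix (Fin q) (Fin q) ℝ := 1 - (2 * c / lam1) • R
  have hM :
      (q : ℝ) • (1 : Matrix (Fin q) (Fin q) ℝ) - (2 * c * q / lam1) • R = (q : ℝ) • A := by
    rw [smul_sub, smul_smul, mul_comm (q : ℝ), div_mul_eq_mul_div]
  have hR : R *ᵥ 1 = lam1 • 1 := hone
  have hrow : ((q : ℝ) • A) *ᵥ 1 = (q * (1 - 2 * c)) • 1 := by
    rw [smul_mulVec, sub_mulVec, one_mulVec, smul_mulVec, hR, smul_smul,
      div_mul_cancel₀ _ hlam1]
    module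
  have key := natCast_mul_det_eq_mul_det_Emat_conj (by omega) hrow
  rw [det_smul, Fintype.card_fin] at key
  rw [hM]
  refine mul_left_cancel₀ (by positivity : (q : ℝ) ≠ 0) ?_
  linear_combination -key

theorem det_Hessian_at_barycenter (q : ℕ) (hq : 2 ≤ q)
    (R : Matrix (Fin q) (Fin q) ℝ) (hsymm : R.IsSymm)
    (lam1 : ℝ) (hlam1 : lam1 ≠ 0)
    (hone : R *ᵥ (fun _ => (1 : ℝ)) = lam1 • (fun _ => (1 : ℝ)))
    (c : ℝ) (hc : c ≠ 1 / 2) :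
    (1 - 2 * c) *
        ((Emat q)ᵀ *
          ((q : ℝ) • (1 : Matrix (Fin q) (Fin q) ℝ) - (2 * c * q / lam1) • R) *
          Emat q).det =
      (q : ℝ) ^ q *
        ((1 : Matrix (Fin q) (Fin q) ℝ) - (2 * c / lam1) • R).det :=
  det_Hessian_at_barycenter_general q hq R lam1 hlam1 hone c
end
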